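/- arXiv:2505.11283 — 3 statements merged into one kernel-verified Lean document; each statement's English description precedes it below -/
import Mathlib

section
/- Let D be a finite multiset of instance values with P(D) ≥ 1 (the dataset) and let C ⊆ D be a sub-multiset with P(C) ≥ 1 (the cover of a pattern). Then oe(C) = max_{c ∈ C} PEN(c, C) − ARL(D) is a tight optimistic estimate for the relative average-ranking-loss interestingness φ^{rasl}: (i) for every sub-multiset C' ⊆ C with P(C') ≥ 1, ARL(C') − ARL(D) ≤ oe(C); and (ii) there exists a sub-multiset C' ⊆ C with P(C') ≥ 1 such that ARL(C') − ARL(D) = oe(C). -/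
/-!
Passing to a sub-multiset can only remove negatives, so each positive's penalty in `C' ≤ C` is at
most its penalty in `C`; as `ARL C'` averages these penalties, it is at most `maxRL C`. The bound is
attained by a positive `c` of maximal penalty together with all negatives of `C`: this cover has `c`
as its only positive, and `c` keeps its full penalty there.
-/

/-- An instance value: a label (`true` = positive, i.e. `y = 1`;
`false` = negative, i.e. `y = 0`) together with a real prediction score. -/
abbrev Inst : Type := Bool × ℝ

/-- `P C`: the number of positive elements of `C`. -/
def P (C : Multiset Inst) : ℕ := (C.filter (fun c => c.1 = true)).card

/-- `N C`: the number of negative elements of `C`. -/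
def N (C : Multiset Inst) : ℕ := (C.filter (fun c => c.1 = false)).card

/-- The penalty `PEN c C`: the sum over all elements `(y, ŷ)` of `C` of
`[y = 0 ∧ ŷ > ŷ_c] + (1/2)·[y = 0 ∧ ŷ = ŷ_c]`. -/
noncomputable def PEN (c : Inst) (C : Multiset Inst) : ℝ :=
  (C.map (fun d => (if d.1 = false ∧ c.2 < d.2 then (1 : ℝ) else 0) +
    (if d.1 = false ∧ d.2 = c.2 then (1 : ℝ) / 2 else 0))).sum

/-- The ranking loss `RL c C`: `PEN c C` if `c` is positive, and `0` otherwise. -/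
noncomputable def RL (c : Inst) (C : Multiset Inst) : ℝ :=
  if c.1 = true then PEN c C else 0

/-- The average ranking loss `ARL C = (Σ_{c ∈ C} RL(c, C)) / P(C)`. -/
noncomputable def ARL (C : Multiset Inst) : ℝ :=
  (C.map (fun c => RL c C)).sum / (P C : ℝ)

/-- `max_{c ∈ C} RL(c, C)`: since all ranking losses are nonnegative, folding
`max` with base `0` over the multiset of ranking losses computes this maximum
whenever `C` contains a positive element (i.e. `P C ≥ 1`).  When `P C ≥ 1`
this also equals `max_{c ∈ C, c positive} PEN(c, C)`. -/
noncomputable def maxRL (C : Multiset Inst) : ℝ :=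
  ((C.map (fun c => RL c C)).toList).foldr max 0

theorem List.foldr_max_eq_or_mem {α : Type*} [LinearOrder α] (b : α) (l : List α) :
    l.foldr max b = b ∨ l.foldr max b ∈ l := by
  induction l with
  | nil => simp
  | cons a l ih =>
    rw [List.foldr_cons]
    rcases max_choice a (l.foldr max b) with h | h <;> rw [h]
    · exact Or.inr List.mem_cons_self
    · exact ih.imp_right (List.mem_cons_of_mem a)

lemma PEN_add (c : Inst) (C₁ C₂ : Multiset Inst) : PEN c (C₁ + C₂) = PEN c C₁ + PEN c C₂ := by
  simp only [PEN, Multiset.map_add, Multiset.sum_add]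

lemma PEN_nonneg (c : Inst) (C : Multiset Inst) : 0 ≤ PEN c C :=
  Multiset.sum_nonneg fun _ hx => by
    obtain ⟨_, _, rfl⟩ := Multiset.mem_map.1 hx
    positivity

lemma PEN_mono (c : Inst) {C' C : Multiset Inst} (h : C' ≤ C) : PEN c C' ≤ PEN c C := by
  obtain ⟨u, rfl⟩ := Multiset.le_iff_exists_add.1 h
  rw [PEN_add]
  linarith [PEN_nonneg c u]

lemma PEN_eq_zero_of_forall_pos (c : Inst) {C : Multiset Inst} (hC : ∀ d ∈ C, d.1 = true) :
    PEN c C = 0 :=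
  Multiset.sum_eq_zero fun _ hx => by
    obtain ⟨d, hd, rfl⟩ := Multiset.mem_map.1 hx
    simp [hC d hd]

lemma PEN_filter_neg (c : Inst) (C : Multiset Inst) :
    PEN c (C.filter (·.1 = false)) = PEN c C := by
  conv_rhs => rw [← Multiset.filter_add_not (·.1 = false) C, PEN_add]
  rw [PEN_eq_zero_of_forall_pos c (C := C.filter (¬·.1 = false))
    fun d hd => by simpa using (Multiset.mem_filter.1 hd).2, add_zero]

lemma PEN_cons_of_pos {c d : Inst} (hd : d.1 = true) (C : Multiset Inst) :
    PEN c (d ::ₘ C) = PEN c C := by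
  simp [PEN, hd]

lemma RL_nonneg (c : Inst) (C : Multiset Inst) : 0 ≤ RL c C := by
  unfold RL
  split
  · exact PEN_nonneg c C
  · exact le_rfl

lemma sum_map_RL_eq_sum_map_PEN_filter (C C' : Multiset Inst) :
    (C.map (RL · C')).sum = ((C.filter (·.1 = true)).map (PEN · C')).sum := by
  induction C using Multiset.induction_on with
  | empty => simp
  | cons a C ih =>
    by_cases ha : a.1 = true
    · rw [Multiset.map_cons, Multiset.sum_cons, ih,
        Multiset.filter_cons_of_pos (p := fun x : Inst => x.1 = true) _ ha,
        Multiset.map_cons, Multiset.sum_cons, RL, if_pos ha]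
    · rw [Multiset.map_cons, Multiset.sum_cons, ih,
        Multiset.filter_cons_of_neg (p := fun x : Inst => x.1 = true) _ ha, RL, if_neg ha, zero_add]

lemma ARL_eq_sum_PEN_div_P (C : Multiset Inst) :
    ARL C = ((C.filter (·.1 = true)).map (PEN · C)).sum / P C := by
  rw [ARL, sum_map_RL_eq_sum_map_PEN_filter]

lemma RL_le_maxRL {c : Inst} {C : Multiset Inst} (hc : c ∈ C) : RL c C ≤ maxRL C :=
  List.le_max_of_le' 0 (Multiset.mem_toList.2 (Multiset.mem_map_of_mem _ hc)) le_rfl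

lemma exists_pos_of_one_le_P {C : Multiset Inst} (hPC : 1 ≤ P C) : ∃ c ∈ C, c.1 = true := by
  obtain ⟨c, hc⟩ := Multiset.card_pos_iff_exists_mem.1 hPC
  exact ⟨c, Multiset.mem_filter.1 hc⟩

lemma exists_pos_RL_eq_maxRL {C : Multiset Inst} (hPC : 1 ≤ P C) :
    ∃ c ∈ C, c.1 = true ∧ RL c C = maxRL C := by
  obtain ⟨c₀, hc₀, hc₀pos⟩ := exists_pos_of_one_le_P hPC
  have attained_at_c₀ (h : maxRL C = 0) : ∃ c ∈ C, c.1 = true ∧ RL c C = maxRL C :=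
    ⟨c₀, hc₀, hc₀pos, le_antisymm (RL_le_maxRL hc₀) (h ▸ RL_nonneg c₀ C)⟩
  rcases List.foldr_max_eq_or_mem 0 (C.map (RL · C)).toList with h | h
  · exact attained_at_c₀ h
  · obtain ⟨c, hc, hmax⟩ := Multiset.mem_map.1 (Multiset.mem_toList.1 h)
    by_cases hcpos : c.1 = true
    · exact ⟨c, hc, hcpos, hmax⟩
    · exact attained_at_c₀ (by rw [maxRL, ← hmax, RL, if_neg hcpos])

lemma ARL_le_maxRL_of_le {C' C : Multiset Inst} (hsub : C' ≤ C) (hPC' : 1 ≤ P C') :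
    ARL C' ≤ maxRL C := by
  rw [ARL_eq_sum_PEN_div_P, div_le_iff₀ (by exact_mod_cast hPC'), mul_comm, ← nsmul_eq_mul, P,
    ← Multiset.card_map (PEN · C')]
  refine Multiset.sum_le_card_nsmul _ _ fun x hx => ?_
  obtain ⟨c, hc, rfl⟩ := Multiset.mem_map.1 hx
  obtain ⟨hcC', hcpos⟩ := Multiset.mem_filter.1 hc
  calc PEN c C' ≤ PEN c C := PEN_mono c hsub
    _ = RL c C := (if_pos hcpos).symm
    _ ≤ maxRL C := RL_le_maxRL (Multiset.mem_of_le hsub hcC')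

section CoverWithSinglePositive

variable {c : Inst} {C : Multiset Inst}

lemma cons_filter_neg_le (hcC : c ∈ C) (hc : c.1 = true) : c ::ₘ C.filter (·.1 = false) ≤ C :=
  (Multiset.cons_le_of_notMem (by simp [hc])).2 ⟨hcC, Multiset.filter_le _ _⟩

lemma filter_pos_cons_filter_neg (hc : c.1 = true) :
    (c ::ₘ C.filter (·.1 = false)).filter (·.1 = true) = {c} := by
  simp [hc, Multiset.filter_filter]

lemma P_cons_filter_neg (hc : c.1 = true) : P (c ::ₘ C.filter (·.1 = false)) = 1 := by
  rw [P, filter_pos_cons_filter_neg hc, Multiset.card_singleton]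

lemma ARL_cons_filter_neg (hc : c.1 = true) : ARL (c ::ₘ C.filter (·.1 = false)) = PEN c C := by
  rw [ARL_eq_sum_PEN_div_P, filter_pos_cons_filter_neg hc, P_cons_filter_neg hc]
  simp [PEN_cons_of_pos hc, PEN_filter_neg]

end CoverWithSinglePositive

theorem maxRL_tight_optimistic_estimate_rasl_general (D C : Multiset Inst)
    (hPC : 1 ≤ P C) :
    (∀ C' ≤ C, 1 ≤ P C' → ARL C' - ARL D ≤ maxRL C - ARL D) ∧
    (∃ C' ≤ C, 1 ≤ P C' ∧ ARL C' - ARL D = maxRL C - ARL D) := by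
  refine ⟨fun C' hC' hPC' => sub_le_sub_right (ARL_le_maxRL_of_le hC' hPC') _, ?_⟩
  obtain ⟨c, hcC, hc, hRL⟩ := exists_pos_RL_eq_maxRL hPC
  refine ⟨c ::ₘ C.filter (·.1 = false), cons_filter_neg_le hcC hc,
    (P_cons_filter_neg hc).ge, ?_⟩
  rw [ARL_cons_filter_neg hc, ← hRL, RL, if_pos hc]

/-- For a dataset `D` and a cover `C ⊆ D` (both containing a
positive element), `oe(C) = max_{positive c ∈ C} PEN(c, C) − ARL(D)`
(which equals `maxRL C − ARL D`) is a tight optimistic estimate for the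
relative average-ranking-loss interestingness `φ^{rasl}(C') = ARL(C') − ARL(D)`. -/
theorem maxRL_tight_optimistic_estimate_rasl (D C : Multiset Inst)
    (hPD : 1 ≤ P D) (hsub : C ≤ D) (hPC : 1 ≤ P C) :
    (∀ C' ≤ C, 1 ≤ P C' → ARL C' - ARL D ≤ maxRL C - ARL D) ∧
    (∃ C' ≤ C, 1 ≤ P C' ∧ ARL C' - ARL D = maxRL C - ARL D) :=
  maxRL_tight_optimistic_estimate_rasl_general D C hPC
end

section
/- Let C be a finite multiset of instance values such that for all (y, ŷ), (y', ŷ') in C, y < y' implies ŷ ≤ ŷ' and y > y' implies ŷ ≥ ŷ'. Then for every sub-multiset C' ⊆ C with P(C') ≥ 1 and N(C') ≥ 1, ROCAUC(C') ≥ 1/2. -/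
/-- `TP C t`: the number of positives of `C` with prediction strictly above `t`. -/
noncomputable def TP (C : Multiset Inst) (t : ℝ) : ℕ :=
  (C.filter (fun c => c.1 = true ∧ t < c.2)).card

/-- `FP C t`: the number of negatives of `C` with prediction strictly above `t`. -/
noncomputable def FP (C : Multiset Inst) (t : ℝ) : ℕ :=
  (C.filter (fun c => c.1 = false ∧ t < c.2)).card

/-- The ROC/PR supporting points `(TP, FP)` of `C`, listed in order of
decreasing threshold, for `t` ranging over the prediction values occurring in
`C` together with `t = -∞` (the latter yielding the final point `(P C, N C)`). -/
noncomputable def supportingPoints (C : Multiset Inst) : List (ℝ × ℝ) :=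
  (((C.map Prod.snd).toFinset.sort (· ≤ ·)).reverse.map
    (fun t => ((TP C t : ℝ), (FP C t : ℝ)))) ++ [((P C : ℝ), (N C : ℝ))]

/-- The trapezoidal sum `Σ_{i=2}^{k} |FP_i − FP_{i−1}| · (TP_i + TP_{i−1})/2`
over a list of `(TP, FP)` points. -/
noncomputable def trapROC : List (ℝ × ℝ) → ℝ
  | [] => 0
  | [_] => 0
  | a :: b :: l => |b.2 - a.2| * (b.1 + a.1) / 2 + trapROC (b :: l)

/-- The area under the ROC curve of `C` (defined whenever `P C ≥ 1` and `N C ≥ 1`). -/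
noncomputable def ROCAUC (C : Multiset Inst) : ℝ :=
  trapROC (supportingPoints C) / ((P C : ℝ) * (N C : ℝ))

/-- The trapezoidal sum `Σ_{i=2}^{k} |TP_i − TP_{i−1}| ·
(TP_i/(TP_i+FP_i) + TP_{i−1}/(TP_{i−1}+FP_{i−1}))/2` over a list of `(TP, FP)`
points; in `ℝ`, division by zero yields `0`, realizing the convention `0/0 = 0`. -/
noncomputable def trapPR : List (ℝ × ℝ) → ℝ
  | [] => 0
  | [_] => 0
  | a :: b :: l =>
      |b.1 - a.1| * (b.1 / (b.1 + b.2) + a.1 / (a.1 + a.2)) / 2 + trapPR (b :: l)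

/-- The (linearly interpolated) area under the PR curve of `C`
(defined whenever `P C ≥ 1`). -/
noncomputable def PRAUC (C : Multiset Inst) : ℝ :=
  trapPR (supportingPoints C) / (P C : ℝ)

/-! Since no negative outscores a positive, every supporting point `(TP, FP)` has `FP = 0`
or `TP = P`: the curve first climbs to its final height and only then moves right. Each
trapezoid of positive width `w` has its right side at height `P`, hence area at least
`P * w / 2`; the widths telescope to `N`, because the first threshold is the top score
(so `FP = 0` there) and the last point is `(P, N)`. -/

def OnROCBoundary (p : ℝ) (x : ℝ × ℝ) : Prop :=
  0 ≤ x.1 ∧ 0 ≤ x.2 ∧ (x.2 = 0 ∨ x.1 = p)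

lemma mul_sub_le_abs_sub_mul_add {p : ℝ} {a b : ℝ × ℝ}
    (ha₁ : 0 ≤ a.1) (ha₂ : 0 ≤ a.2) (hb : OnROCBoundary p b) (hab : a.2 ≤ b.2) :
    p * (b.2 - a.2) ≤ |b.2 - a.2| * (b.1 + a.1) := by
  rw [abs_of_nonneg (sub_nonneg.mpr hab)]
  rcases hb.2.2 with hb0 | hbp
  · have : a.2 = 0 := le_antisymm (hb0 ▸ hab) ha₂
    simp [this, hb0]
  · rw [hbp]
    rw [mul_comm]
    exact mul_le_mul_of_nonneg_left (le_add_of_nonneg_right ha₁) (sub_nonneg.mpr hab)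

lemma mul_sub_le_trapROC (p : ℝ) (a : ℝ × ℝ) (l : List (ℝ × ℝ))
    (hchain : (a :: l).IsChain (fun u v => u.2 ≤ v.2))
    (hbdry : ∀ x ∈ a :: l, OnROCBoundary p x) :
    p * (((a :: l).getLast (List.cons_ne_nil a l)).2 - a.2) / 2 ≤ trapROC (a :: l) := by
  induction l generalizing a with
  | nil => simp [trapROC]
  | cons b l ih =>
    obtain ⟨hab, hchain⟩ := List.isChain_cons_cons.mp hchain
    have hstep := mul_sub_le_abs_sub_mul_add (hbdry a (by simp)).1 (hbdry a (by simp)).2.1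
      (hbdry b (by simp)) hab
    have htail := ih b hchain (fun x hx => hbdry x (List.mem_cons_of_mem a hx))
    rw [List.getLast_cons_cons, trapROC]
    linarith

section

variable {C : Multiset Inst}

lemma FP_antitone (C : Multiset Inst) : Antitone (FP C) := fun _ _ hst =>
  Multiset.card_le_card <|
    Multiset.monotone_filter_right _ fun _ hc => ⟨hc.1, hst.trans_lt hc.2⟩

lemma FP_le_N (C : Multiset Inst) (t : ℝ) : FP C t ≤ N C :=
  Multiset.card_le_card <| Multiset.monotone_filter_right _ fun _ hc => hc.1

lemma FP_eq_zero_of_forall_le {t : ℝ} (ht : ∀ c ∈ C, c.2 ≤ t) : FP C t = 0 := by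
  rw [FP, Multiset.card_eq_zero, Multiset.filter_eq_nil]
  exact fun c hc h => (ht c hc).not_gt h.2

lemma TP_eq_P_of_FP_ne_zero (hsep : ∀ n ∈ C, ∀ p ∈ C, n.1 < p.1 → n.2 ≤ p.2) {t : ℝ}
    (hFP : FP C t ≠ 0) : TP C t = P C := by
  obtain ⟨n, hn, hneg, htn⟩ : ∃ n ∈ C, n.1 = false ∧ t < n.2 := by
    simpa [FP, Multiset.filter_eq_nil] using hFP
  refine congrArg Multiset.card <|
    Multiset.filter_congr fun c hc => ⟨And.left, fun hpos => ⟨hpos, ?_⟩⟩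
  exact htn.trans_le (hsep n hn c hc (by simp [hneg, hpos]))

lemma onROCBoundary_TP_FP (hsep : ∀ n ∈ C, ∀ p ∈ C, n.1 < p.1 → n.2 ≤ p.2) (t : ℝ) :
    OnROCBoundary (P C) ((TP C t : ℝ), (FP C t : ℝ)) := by
  refine ⟨by positivity, by positivity, ?_⟩
  by_cases h : FP C t = 0
  · exact Or.inl (by simp [h])
  · exact Or.inr (by simp [TP_eq_P_of_FP_ne_zero hsep h])

lemma mul_div_two_le_trapROC_supportingPoints
    (hsep : ∀ n ∈ C, ∀ p ∈ C, n.1 < p.1 → n.2 ≤ p.2) (hC : C ≠ 0) :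
    (P C : ℝ) * N C / 2 ≤ trapROC (supportingPoints C) := by
  set ts := ((C.map Prod.snd).toFinset.sort (· ≤ ·)).reverse
  set f : ℝ → ℝ × ℝ := fun t => ((TP C t : ℝ), (FP C t : ℝ))
  have hsp : supportingPoints C = ts.map f ++ [((P C : ℝ), (N C : ℝ))] := rfl
  have hts : ts.Pairwise (· ≥ ·) := List.pairwise_reverse.mpr (Finset.pairwise_sort _ _)
  have hchain : (supportingPoints C).IsChain (fun u v => u.2 ≤ v.2) := by
    refine List.Pairwise.isChain <|
      hsp ▸ List.pairwise_append.mpr ⟨?_, List.pairwise_singleton _ _, ?_⟩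
    · exact List.pairwise_map.mpr (hts.imp fun h => Nat.cast_le.mpr (FP_antitone C h))
    · simp only [List.mem_map, List.mem_singleton]
      rintro _ ⟨t, -, rfl⟩ _ rfl
      exact Nat.cast_le.mpr (FP_le_N C t)
  have hbdry : ∀ x ∈ supportingPoints C, OnROCBoundary (P C) x := by
    simp only [hsp, List.mem_append, List.mem_map, List.mem_singleton]
    rintro x (⟨t, -, rfl⟩ | rfl)
    · exact onROCBoundary_TP_FP hsep t
    · exact ⟨by positivity, by positivity, Or.inr rfl⟩
  have hscores : ∀ c ∈ C, c.2 ∈ ts := fun c hc => by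
    simpa [ts] using Multiset.mem_map_of_mem Prod.snd hc
  obtain ⟨c, hc⟩ := Multiset.exists_mem_of_ne_zero hC
  obtain ⟨t₀, rest, hts_eq⟩ := List.exists_cons_of_ne_nil (List.ne_nil_of_mem (hscores c hc))
  have hFP₀ : FP C t₀ = 0 := by
    rw [hts_eq, List.pairwise_cons] at hts
    refine FP_eq_zero_of_forall_le fun c hc => ?_
    rcases List.mem_cons.mp (hts_eq ▸ hscores c hc) with h | h
    exacts [h.le, hts.1 _ h]
  rw [hts_eq, List.map_cons, List.cons_append] at hsp
  have := mul_sub_le_trapROC (P C) _ _ (hsp ▸ hchain) (hsp ▸ hbdry)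
  rw [hsp]
  simpa [f, hFP₀] using this

end

/-- If for all `(y, ŷ), (y', ŷ')` in `C`, `y < y'` implies
`ŷ ≤ ŷ'` and `y > y'` implies `ŷ ≥ ŷ'`, then every sub-multiset `C' ⊆ C` with
`P C' ≥ 1` and `N C' ≥ 1` has `ROCAUC C' ≥ 1/2`. -/
theorem rocauc_ge_half_of_perfect_with_ties (C : Multiset Inst)
    (hperf : ∀ c ∈ C, ∀ c' ∈ C,
      (c.1 < c'.1 → c.2 ≤ c'.2) ∧ (c'.1 < c.1 → c'.2 ≤ c.2)) :
    ∀ C' ≤ C, 1 ≤ P C' → 1 ≤ N C' → 1 / 2 ≤ ROCAUC C' := by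
  intro C' hC' hP hN
  have hsep : ∀ n ∈ C', ∀ p ∈ C', n.1 < p.1 → n.2 ≤ p.2 := fun n hn p hp =>
    (hperf n (Multiset.mem_of_le hC' hn) p (Multiset.mem_of_le hC' hp)).1
  have hC'ne : C' ≠ 0 := by
    rintro rfl
    simp [P] at hP
  have hPN : (0 : ℝ) < P C' * N C' := by positivity
  rw [ROCAUC, le_div_iff₀ hPN]
  linarith [mul_div_two_le_trapROC_supportingPoints hsep hC'ne]
end

section
/- Let D be a finite multiset of instance values with P(D) ≥ 1 (the dataset) and let C ⊆ D be a sub-multiset with P(C) ≥ 1 (the cover of a pattern). Then oe(C) = PRAUC(D) − b_PRAUC(C) is a tight optimistic estimate for the relative PR AUC interestingness φ^{rPRAUC}: (i) for every sub-multiset C' ⊆ C with P(C') ≥ 1, PRAUC(D) − PRAUC(C') ≤ oe(C); and (ii) there exists a sub-multiset C' ⊆ C with P(C') ≥ 1 such that PRAUC(D) − PRAUC(C') = oe(C). -/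
/-!
Let `m` be the least score of a positive in `C` and `n` the number of negatives of `C` scoring at
least `m`, and let `C' ⊆ C` contain a positive. Wherever recall rises between consecutive
thresholds `b < a` of `C'`, some positive of `C'` scores in `(b, a]`, so `m ≤ a` and every negative
of `C'` above `b` scores at least `m`: the precision at `b` is at least `1 / (1 + n)`, and summing
the trapezoids gives `PRAUC C' ≥ 1 / (2 (1 + n))`. The worst cover has a single positive, so its
recall rises exactly once, from precision `0` to a precision at most `1 / (1 + n)` since that
threshold lies below `m`. Hence `PRAUC C_worst ≤ 1 / (2 (1 + n))`, and `C_worst` is itself such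
a `C'`.
-/

theorem Multiset.filter_le_filter_of_imp {α : Type*} {p q : α → Prop} [DecidablePred p]
    [DecidablePred q] {s : Multiset α} (h : ∀ x ∈ s, p x → q x) : s.filter p ≤ s.filter q :=
  calc s.filter p = s.filter (fun x => p x ∧ q x) :=
        Multiset.filter_congr fun x hx => ⟨fun hp => ⟨hp, h x hx hp⟩, And.left⟩
    _ ≤ s.filter q := Multiset.monotone_filter_right s fun _ => And.right

noncomputable def precision (p : ℝ × ℝ) : ℝ := p.1 / (p.1 + p.2)

noncomputable def trapPRStep (a b : ℝ × ℝ) : ℝ := |b.1 - a.1| * (precision b + precision a) / 2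

theorem trapPR_cons_cons (a b : ℝ × ℝ) (l : List (ℝ × ℝ)) :
    trapPR (a :: b :: l) = trapPRStep a b + trapPR (b :: l) := rfl

theorem trapPR_le_of_isChain (φ : ℝ × ℝ → ℝ) : ∀ (l : List (ℝ × ℝ)) (hl : l ≠ []),
    l.IsChain (fun a b => trapPRStep a b ≤ φ b - φ a) →
      trapPR l ≤ φ (l.getLast hl) - φ (l.head hl)
  | [_], _, _ => by simp [trapPR]
  | p :: q :: l, _, h => by
    rw [List.isChain_cons_cons] at h
    have := trapPR_le_of_isChain φ (q :: l) (List.cons_ne_nil _ _) h.2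
    rw [List.head_cons] at this
    rw [trapPR_cons_cons, List.getLast_cons_cons, List.head_cons]
    linarith [h.1]

theorem le_trapPR_of_isChain (φ : ℝ × ℝ → ℝ) : ∀ (l : List (ℝ × ℝ)) (hl : l ≠ []),
    l.IsChain (fun a b => φ b - φ a ≤ trapPRStep a b) →
      φ (l.getLast hl) - φ (l.head hl) ≤ trapPR l
  | [_], _, _ => by simp [trapPR]
  | p :: q :: l, _, h => by
    rw [List.isChain_cons_cons] at h
    have := le_trapPR_of_isChain φ (q :: l) (List.cons_ne_nil _ _) h.2
    rw [List.head_cons] at this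
    rw [trapPR_cons_cons, List.getLast_cons_cons, List.head_cons]
    linarith [h.1]

theorem le_trapPRStep {K : ℝ} {a b : ℝ × ℝ} (hab : a.1 ≤ b.1) (ha : 0 ≤ precision a)
    (hK : a.1 < b.1 → K ≤ precision b) : b.1 * K / 2 - a.1 * K / 2 ≤ trapPRStep a b := by
  rcases hab.lt_or_eq with hlt | heq
  · rw [trapPRStep, abs_of_pos (sub_pos.mpr hlt)]
    have hKb := hK hlt
    have hrise := sub_pos.mpr hlt
    nlinarith
  · simp [trapPRStep, heq]

theorem trapPRStep_le {K : ℝ} {a b : ℝ × ℝ} (hab : a.1 ≤ b.1)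
    (hK : a.1 < b.1 → precision b + precision a ≤ K) :
    trapPRStep a b ≤ b.1 * K / 2 - a.1 * K / 2 := by
  rcases hab.lt_or_eq with hlt | heq
  · rw [trapPRStep, abs_of_pos (sub_pos.mpr hlt)]
    have hKb := hK hlt
    have hrise := sub_pos.mpr hlt
    nlinarith
  · simp [trapPRStep, heq]

def AdjacentThresholds (C : Multiset Inst) (a b : ℝ) : Prop :=
  b < a ∧ ∀ c ∈ C, b < c.2 → a ≤ c.2

noncomputable def prPoint (C : Multiset Inst) (t : ℝ) : ℝ × ℝ := ((TP C t : ℝ), (FP C t : ℝ))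

section Thresholds

variable {C : Multiset Inst}

theorem TP_le_TP {a b : ℝ} (h : b ≤ a) : TP C a ≤ TP C b :=
  Multiset.card_le_card (Multiset.monotone_filter_right _ fun _ hc => ⟨hc.1, h.trans_lt hc.2⟩)

theorem TP_le_P (t : ℝ) : TP C t ≤ P C :=
  Multiset.card_le_card (Multiset.monotone_filter_right _ fun _ hc => hc.1)

theorem TP_eq_zero_of_forall_le {t : ℝ} (h : ∀ c ∈ C, c.2 ≤ t) : TP C t = 0 := by
  rw [TP, Multiset.card_eq_zero, Multiset.filter_eq_nil]
  exact fun c hc hct => (h c hc).not_gt hct.2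

theorem TP_eq_P_of_forall_lt {t : ℝ} (h : ∀ c ∈ C, t < c.2) : TP C t = P C :=
  congrArg Multiset.card (Multiset.filter_congr fun c hc => ⟨And.left, fun hc' => ⟨hc', h c hc⟩⟩)

theorem FP_eq_N_of_forall_lt {t : ℝ} (h : ∀ c ∈ C, t < c.2) : FP C t = N C :=
  congrArg Multiset.card (Multiset.filter_congr fun c hc => ⟨And.left, fun hc' => ⟨hc', h c hc⟩⟩)

theorem exists_pos_mem_Ioc_of_TP_lt {a b : ℝ} (h : TP C a < TP C b) :
    ∃ c ∈ C, c.1 = true ∧ b < c.2 ∧ c.2 ≤ a := by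
  by_contra! hne
  exact h.not_ge (Multiset.card_le_card (Multiset.filter_le_filter_of_imp
    fun c hc hcb => ⟨hcb.1, hne c hc hcb.1 hcb.2⟩))

theorem isChain_adjacentThresholds {l : List ℝ} (hl : l.Pairwise (· > ·))
    (hC : ∀ c ∈ C, c.2 ∈ l) : l.IsChain (AdjacentThresholds C) := by
  rw [List.isChain_iff_forall_rel_of_append_cons_cons]
  rintro a b l₁ l₂ rfl
  obtain ⟨-, hab, hl₁⟩ := List.pairwise_append.mp hl
  obtain ⟨ha, hb⟩ := List.pairwise_cons.mp hab
  have hba : b < a := ha b List.mem_cons_self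
  refine ⟨hba, fun c hc hbc => ?_⟩
  rcases List.mem_append.mp (hC c hc) with h | h
  · exact (hl₁ _ h a List.mem_cons_self).le
  · rcases List.mem_cons.mp h with h | h
    · exact h.ge
    · rcases List.mem_cons.mp h with h | h
      · exact absurd h hbc.ne'
      · exact absurd ((List.pairwise_cons.mp hb).1 _ h) hbc.not_gt

theorem exists_supportingPoints_eq_map (C : Multiset Inst) :
    ∃ (t : ℝ) (l : List ℝ), supportingPoints C = (t :: l).map (prPoint C) ∧
      (t :: l).IsChain (AdjacentThresholds C) ∧ TP C t = 0 ∧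
      TP C ((t :: l).getLast (List.cons_ne_nil t l)) = P C := by
  set d := ((C.map Prod.snd).toFinset.sort (· ≤ ·)).reverse with hd
  have hval : ∀ c ∈ C, c.2 ∈ (C.map Prod.snd).toFinset := fun c hc =>
    Multiset.mem_toFinset.mpr (Multiset.mem_map_of_mem _ hc)
  have hd_mem : ∀ c ∈ C, c.2 ∈ d := fun c hc => by simpa [hd] using hval c hc
  -- The final supporting point `(P C, N C)` is `prPoint C t₀` for any `t₀` below every score.
  obtain ⟨t₀, -, ht₀⟩ := Finset.exists_between' ∅ (C.map Prod.snd).toFinset (by simp)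
  have hlow : ∀ c ∈ C, t₀ < c.2 := fun c hc => ht₀ _ (hval c hc)
  have hmem : ∀ c ∈ C, c.2 ∈ d ++ [t₀] := fun c hc => List.mem_append_left _ (hd_mem c hc)
  have hsorted : (d ++ [t₀]).Pairwise (· > ·) := by
    refine List.pairwise_append.mpr ⟨?_, List.pairwise_singleton _ _, fun x hx y hy => ?_⟩
    · exact List.pairwise_reverse.mpr (Finset.sortedLT_sort _).pairwise
    · obtain ⟨c, hc, rfl⟩ : ∃ c ∈ C, c.2 = x := by simpa [hd] using hx
      exact (List.mem_singleton.mp hy) ▸ hlow c hc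
  have hpts : supportingPoints C = (d ++ [t₀]).map (prPoint C) := by
    simp [supportingPoints, prPoint, hd, TP_eq_P_of_forall_lt hlow, FP_eq_N_of_forall_lt hlow]
  obtain ⟨t, l, htl⟩ := List.exists_cons_of_ne_nil (List.concat_ne_nil t₀ d)
  have hlast : ∀ h, (t :: l).getLast h = t₀ := by
    rw [← htl]
    exact fun _ => List.getLast_concat ..
  rw [htl] at hmem hsorted hpts
  refine ⟨t, l, hpts, isChain_adjacentThresholds hsorted hmem,
    TP_eq_zero_of_forall_le fun c hc => ?_, by rw [hlast, TP_eq_P_of_forall_lt hlow]⟩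
  rcases List.mem_cons.mp (hmem c hc) with h | h
  · exact h.le
  · exact ((List.pairwise_cons.mp hsorted).1 _ h).le

end Thresholds

section Bounds

variable {C : Multiset Inst}

theorem half_le_PRAUC (hP : 0 < P C) {K : ℝ}
    (hK : ∀ a b, AdjacentThresholds C a b → TP C a < TP C b → K ≤ precision (prPoint C b)) :
    K / 2 ≤ PRAUC C := by
  obtain ⟨t, l, hpts, hchain, h0, hlast⟩ := exists_supportingPoints_eq_map C
  have hbound :=
    le_trapPR_of_isChain (fun p => p.1 * K / 2) ((t :: l).map (prPoint C)) (by simp) ?_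
  · simp only [List.getLast_map, List.head_map, List.head_cons, prPoint, h0, hlast] at hbound
    rw [PRAUC, hpts, le_div_iff₀ (by exact_mod_cast hP)]
    linarith
  · rw [List.isChain_map]
    refine hchain.imp fun a b hab => le_trapPRStep ?_ ?_ fun hlt => hK a b hab ?_
    · exact Nat.cast_le.mpr (TP_le_TP hab.1.le)
    · exact div_nonneg (Nat.cast_nonneg _) (by simp only [prPoint]; positivity)
    · exact Nat.cast_lt.mp hlt

theorem PRAUC_le_half (hP : 0 < P C) {K : ℝ}
    (hK : ∀ a b, AdjacentThresholds C a b → TP C a < TP C b →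
      precision (prPoint C b) + precision (prPoint C a) ≤ K) :
    PRAUC C ≤ K / 2 := by
  obtain ⟨t, l, hpts, hchain, h0, hlast⟩ := exists_supportingPoints_eq_map C
  have hbound :=
    trapPR_le_of_isChain (fun p => p.1 * K / 2) ((t :: l).map (prPoint C)) (by simp) ?_
  · simp only [List.getLast_map, List.head_map, List.head_cons, prPoint, h0, hlast] at hbound
    rw [PRAUC, hpts, div_le_iff₀ (by exact_mod_cast hP)]
    linarith
  · rw [List.isChain_map]
    refine hchain.imp fun a b hab => trapPRStep_le ?_ fun hlt => hK a b hab ?_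
    · exact Nat.cast_le.mpr (TP_le_TP hab.1.le)
    · exact Nat.cast_lt.mp hlt

end Bounds

noncomputable def negAtLeast (C : Multiset Inst) (m : ℝ) : ℕ :=
  (C.filter (fun c => c.1 = false ∧ m ≤ c.2)).card

def worstCase (C : Multiset Inst) (c₀ : Inst) : Multiset Inst :=
  c₀ ::ₘ C.filter (fun c => c.1 = false)

section NegAtLeast

variable {C : Multiset Inst} {m : ℝ}

theorem negAtLeast_mono {C' : Multiset Inst} (h : C' ≤ C) : negAtLeast C' m ≤ negAtLeast C m :=
  Multiset.card_le_card (Multiset.filter_le_filter _ h)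

theorem one_div_le_PRAUC (hP : 1 ≤ P C) (hm : ∀ c ∈ C, c.1 = true → m ≤ c.2) :
    1 / (1 + negAtLeast C m : ℝ) / 2 ≤ PRAUC C := by
  refine half_le_PRAUC hP fun a b ⟨_, hab⟩ hlt => ?_
  obtain ⟨c, hc, hcpos, -, hca⟩ := exists_pos_mem_Ioc_of_TP_lt hlt
  have hTP : (1 : ℝ) ≤ TP C b := by exact_mod_cast Nat.one_le_of_lt hlt
  have hFP : (FP C b : ℝ) ≤ negAtLeast C m :=
    Nat.cast_le.mpr <| Multiset.card_le_card <| Multiset.filter_le_filter_of_imp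
      fun x hx h => ⟨h.1, (hm c hc hcpos).trans (hca.trans (hab x hx h.2))⟩
  have hn : (0 : ℝ) ≤ negAtLeast C m := Nat.cast_nonneg _
  rw [precision, prPoint, div_le_div_iff₀ (by positivity) (by positivity)]
  nlinarith

theorem PRAUC_le_one_div (hP : P C = 1) (hm : ∀ c ∈ C, c.1 = true → c.2 ≤ m) :
    PRAUC C ≤ 1 / (1 + negAtLeast C m : ℝ) / 2 := by
  refine PRAUC_le_half (hP ▸ one_pos) fun a b _ hlt => ?_
  have hb : TP C b = 1 := le_antisymm (hP ▸ TP_le_P b) (Nat.one_le_of_lt hlt)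
  have ha : TP C a = 0 := by omega
  obtain ⟨c, hc, hcpos, hbc, -⟩ := exists_pos_mem_Ioc_of_TP_lt hlt
  have hFP : negAtLeast C m ≤ FP C b :=
    Multiset.card_le_card <| Multiset.filter_le_filter_of_imp
      fun x _ h => ⟨h.1, hbc.trans_le ((hm c hc hcpos).trans h.2)⟩
  simp only [precision, prPoint, ha, hb, Nat.cast_zero, Nat.cast_one, zero_div, add_zero]
  gcongr

end NegAtLeast

section WorstCase

variable (C : Multiset Inst) {c₀ : Inst}

theorem P_worstCase (hpos : c₀.1 = true) : P (worstCase C c₀) = 1 := by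
  rw [P, worstCase, Multiset.filter_cons_of_pos (p := fun c : Inst => c.1 = true) _ hpos,
    Multiset.filter_filter, Multiset.card_cons, Multiset.filter_eq_nil.mpr fun c _ h => by simp_all]
  rfl

theorem negAtLeast_worstCase (hpos : c₀.1 = true) (m : ℝ) :
    negAtLeast (worstCase C c₀) m = negAtLeast C m := by
  rw [negAtLeast, worstCase, Multiset.filter_cons_of_neg _ (by simp [hpos]),
    Multiset.filter_filter, negAtLeast]
  exact congrArg Multiset.card (Multiset.filter_congr fun c _ => by tauto)

theorem worstCase_le (hc₀ : c₀ ∈ C) (hpos : c₀.1 = true) : worstCase C c₀ ≤ C := by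
  conv_rhs => rw [← Multiset.cons_erase hc₀]
  refine Multiset.cons_le_cons _ ?_
  conv_lhs => rw [← Multiset.cons_erase hc₀, Multiset.filter_cons_of_neg _ (by simp [hpos])]
  exact Multiset.filter_le _ _

theorem PRAUC_worstCase_le (hpos : c₀.1 = true) :
    PRAUC (worstCase C c₀) ≤ 1 / (1 + negAtLeast C c₀.2 : ℝ) / 2 := by
  rw [← negAtLeast_worstCase C hpos]
  refine PRAUC_le_one_div (P_worstCase C hpos) fun c hc hcpos => ?_
  rcases Multiset.mem_cons.mp hc with rfl | hc
  · exact le_rfl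
  · exact absurd hcpos (by simp [(Multiset.mem_filter.mp hc).2])

end WorstCase

theorem bPRAUC_tight_optimistic_estimate_general (D C : Multiset Inst)
    (c₀ : Inst) (hc₀ : c₀ ∈ C) (hpos : c₀.1 = true)
    (hmin : ∀ c ∈ C, c.1 = true → c₀.2 ≤ c.2) :
    (∀ C' ≤ C, 1 ≤ P C' →
      PRAUC D - PRAUC C' ≤
        PRAUC D - PRAUC (c₀ ::ₘ C.filter (fun c => c.1 = false))) ∧
    (∃ C' ≤ C, 1 ≤ P C' ∧
      PRAUC D - PRAUC C' =
        PRAUC D - PRAUC (c₀ ::ₘ C.filter (fun c => c.1 = false))) := by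
  have hworst : ∀ C' ≤ C, 1 ≤ P C' → PRAUC (worstCase C c₀) ≤ PRAUC C' := fun C' hC' hP' =>
    calc PRAUC (worstCase C c₀)
        ≤ 1 / (1 + negAtLeast C c₀.2 : ℝ) / 2 := PRAUC_worstCase_le C hpos
      _ ≤ 1 / (1 + negAtLeast C' c₀.2 : ℝ) / 2 := by gcongr; exact negAtLeast_mono hC'
      _ ≤ PRAUC C' := one_div_le_PRAUC hP' fun c hc => hmin c (Multiset.mem_of_le hC' hc)
  exact ⟨fun C' hC' hP' => sub_le_sub_left (hworst C' hC' hP') _,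
    worstCase C c₀, worstCase_le C hc₀ hpos, (P_worstCase C hpos).ge, rfl⟩

/-- For a dataset `D` and a cover `C ⊆ D` (both containing a
positive element), `oe(C) = PRAUC D − b_PRAUC C` is a tight optimistic
estimate for the relative PR AUC interestingness
`φ^{rPRAUC}(C') = PRAUC D − PRAUC C'`, where `b_PRAUC C = PRAUC C_worst` and
`C_worst = {c₀} ∪ (negatives of C)` for a positive element `c₀` of `C` whose
prediction value is minimal among the positives of `C`. -/
theorem bPRAUC_tight_optimistic_estimate (D C : Multiset Inst)
    (hPD : 1 ≤ P D) (hsub : C ≤ D) (hPC : 1 ≤ P C)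
    (c₀ : Inst) (hc₀ : c₀ ∈ C) (hpos : c₀.1 = true)
    (hmin : ∀ c ∈ C, c.1 = true → c₀.2 ≤ c.2) :
    (∀ C' ≤ C, 1 ≤ P C' →
      PRAUC D - PRAUC C' ≤
        PRAUC D - PRAUC (c₀ ::ₘ C.filter (fun c => c.1 = false))) ∧
    (∃ C' ≤ C, 1 ≤ P C' ∧
      PRAUC D - PRAUC C' =
        PRAUC D - PRAUC (c₀ ::ₘ C.filter (fun c => c.1 = false))) :=
  bPRAUC_tight_optimistic_estimate_general D C c₀ hc₀ hpos hmin
end
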